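/- arXiv:2009.10935 — 3 statements merged into one kernel-verified Lean document; each statement's English description precedes it below -/
import Mathlib

section
/- Every solution of the ODE f'' - (f')² = 1 on an open interval is of the form f(t) = c - log|cos(t + ψ)| for constants c and ψ. -/
/-!
Since `(arctan ∘ f')' = f'' / (1 + f'²) = 1`, the function `arctan ∘ f'` is `t ↦ t + ψ` on the
interval. Hence `f' t = tan (t + ψ)` with `cos (t + ψ) > 0`, and `f` is a primitive of
`tan (· + ψ)`, namely `-log |cos (· + ψ)|` up to a constant.
-/

open Real

theorem IsOpen.exists_eq_add_of_hasDerivAt {s : Set ℝ} (hs : IsOpen s) (hs' : IsPreconnected s)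
    {f g f' : ℝ → ℝ} (hf : ∀ t ∈ s, HasDerivAt f (f' t) t)
    (hg : ∀ t ∈ s, HasDerivAt g (f' t) t) : ∃ c, ∀ t ∈ s, f t = g t + c :=
  hs.exists_eq_add_of_deriv_eq hs'
    (fun t ht => (hf t ht).differentiableAt.differentiableWithinAt)
    (fun t ht => (hg t ht).differentiableAt.differentiableWithinAt)
    (fun t ht => (hf t ht).deriv.trans (hg t ht).deriv.symm)

theorem Real.hasDerivAt_neg_log_abs_cos {x : ℝ} (hx : cos x ≠ 0) :
    HasDerivAt (fun y => -log |cos y|) (tan x) x := by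
  have h := ((hasDerivAt_cos x).log hx).neg
  rw [neg_div, neg_neg, ← tan_eq_sin_div_cos] at h
  simp only [log_abs]
  exact h

theorem hasDerivAt_arctan_comp_of_sub_sq_eq_one {f' : ℝ → ℝ} {f'' t : ℝ}
    (hf' : HasDerivAt f' f'' t) (hode : f'' - f' t ^ 2 = 1) :
    HasDerivAt (fun s => arctan (f' s)) 1 t := by
  have hpos : 0 < 1 + f' t ^ 2 := by positivity
  convert hf'.arctan using 1
  field_simp
  linarith

theorem exists_arctan_eq_add_of_sub_sq_eq_one {s : Set ℝ} (hs : IsOpen s) (hs' : IsPreconnected s)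
    {f' f'' : ℝ → ℝ} (hf' : ∀ t ∈ s, HasDerivAt f' (f'' t) t)
    (hode : ∀ t ∈ s, f'' t - f' t ^ 2 = 1) : ∃ ψ, ∀ t ∈ s, arctan (f' t) = t + ψ :=
  hs.exists_eq_add_of_hasDerivAt hs'
    (fun t ht => hasDerivAt_arctan_comp_of_sub_sq_eq_one (hf' t ht) (hode t ht))
    (fun t _ => hasDerivAt_id t)

/-- Every solution of `f'' - (f')² = 1` on an open interval has the form
`f t = c - log |cos (t + ψ)|`. -/
theorem stmt1 (a b : ℝ) (f f' f'' : ℝ → ℝ)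
    (hf : ∀ t ∈ Set.Ioo a b, HasDerivAt f (f' t) t)
    (hf' : ∀ t ∈ Set.Ioo a b, HasDerivAt f' (f'' t) t)
    (hode : ∀ t ∈ Set.Ioo a b, f'' t - (f' t) ^ 2 = 1) :
    ∃ c ψ : ℝ, ∀ t ∈ Set.Ioo a b, f t = c - Real.log |Real.cos (t + ψ)| := by
  obtain ⟨ψ, hψ⟩ := exists_arctan_eq_add_of_sub_sq_eq_one isOpen_Ioo isPreconnected_Ioo hf' hode
  have hprim : ∀ t ∈ Set.Ioo a b, HasDerivAt (fun s => -log |cos (s + ψ)|) (f' t) t := by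
    intro t ht
    have hcos : cos (t + ψ) ≠ 0 := by
      rw [← hψ t ht]
      exact (cos_arctan_pos _).ne'
    rw [← tan_arctan (f' t), hψ t ht]
    exact (hasDerivAt_neg_log_abs_cos hcos).comp_add_const t ψ
  obtain ⟨c, hc⟩ := isOpen_Ioo.exists_eq_add_of_hasDerivAt isPreconnected_Ioo hf hprim
  exact ⟨c, ψ, fun t ht => by rw [hc t ht]; ring⟩
end

section
/- Let m ≥ 2 be an integer and consider the ODE λ'' - (4i - 2m tan φ) λ' + 4m(1 - i tan φ) λ = 0 on (-π/2, π/2) for a complex-valued function λ. If λ(φ) = A e^{((2m-4)/(2m-1)) i φ} + B (with constants A, B ∈ ℂ when m ≠ 2), then λ is identically zero, i.e. A = B = 0. -/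
/-!
Substituting `λ = A e^{icφ} + B`, `c = (2m-4)/(2m-1)`, into the second equation gives, with
`t = tan φ`, `A e^{icφ} (α + iμt) + 4m(1 - it) B = 0`, where `α = 4m + 4c - c²` and
`μ = 2m(c - 2)`. Multiplying the equations at `φ = ±π/4`, where the exponentials cancel, and
comparing with `φ = 0` yields `A² (μ² - α²) = 0`; and `μ² - α²` is a nonzero multiple of
`m²(m-1)(m-2)(m+1)²`. Hence `A = 0`, and then `B = 0`.
-/

open Real Complex

theorem hasDerivAt_const_mul_exp_add (A B k : ℂ) (x : ℝ) :
    HasDerivAt (fun y : ℝ => A * Complex.exp (k * y) + B) (A * k * Complex.exp (k * x)) x := by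
  have h := ((hasDerivAt_id' (x : ℂ)).const_mul k).cexp.comp_ofReal.const_mul A |>.add_const B
  exact h.congr_deriv (by ring)

theorem eqOn_deriv_of_eqOn_const_mul_exp_add {s : Set ℝ} (hs : IsOpen s) {l l' : ℝ → ℂ}
    {A B k : ℂ} (hl : ∀ x ∈ s, HasDerivAt l (l' x) x)
    (hform : ∀ x ∈ s, l x = A * Complex.exp (k * x) + B) :
    ∀ x ∈ s, l' x = A * k * Complex.exp (k * x) := fun x hx =>
  (hl x hx).unique <| (hasDerivAt_const_mul_exp_add A B k x).congr_of_eventuallyEq <|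
    Filter.eventuallyEq_of_mem (hs.mem_nhds hx) hform

theorem sq_mul_sub_sq_eq_zero_of_three_points {A B α μ β e e' : ℂ} (he : e * e' = 1)
    (h₀ : A * α + β * B = 0) (h₁ : A * e * (α + I * μ) + β * (1 - I) * B = 0)
    (h₂ : A * e' * (α - I * μ) + β * (1 + I) * B = 0) :
    A ^ 2 * (μ ^ 2 - α ^ 2) = 0 := by
  linear_combination A * e' * (α - I * μ) * h₁ - β * (1 - I) * B * h₂
    - A ^ 2 * (α ^ 2 + μ ^ 2) * he - 2 * (A * α - β * B) * h₀
    + (A ^ 2 * μ ^ 2 * e * e' - β ^ 2 * B ^ 2) * I_sq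

theorem sq_sub_sq_ne_zero_of_eq_div {m : ℕ} (hm : 1 < m) (hm2 : m ≠ 2) {c : ℂ}
    (hc : (2 * m - 4) / (2 * m - 1) = c) :
    (2 * m * (c - 2)) ^ 2 - (4 * m + 4 * c - c ^ 2) ^ 2 ≠ 0 := by
  have hden : (2 * m - 1 : ℂ) ≠ 0 := sub_ne_zero.2 (by exact_mod_cast (by omega : 2 * m ≠ 1))
  have hfactor : (2 * m * (c - 2)) ^ 2 - (4 * m + 4 * c - c ^ 2) ^ 2
      = -192 * m ^ 2 * (m - 1) * (m - 2) * (m + 1) ^ 2 / (2 * m - 1) ^ 4 := by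
    subst c
    field_simp
    ring
  have h0 : (m : ℂ) ≠ 0 := by exact_mod_cast (by omega : m ≠ 0)
  have h1 : (m - 1 : ℂ) ≠ 0 := sub_ne_zero.2 (by exact_mod_cast hm.ne')
  have h2 : (m - 2 : ℂ) ≠ 0 := sub_ne_zero.2 (by exact_mod_cast hm2)
  have h3 : (m + 1 : ℂ) ≠ 0 := by exact_mod_cast m.succ_ne_zero
  rw [hfactor]
  exact div_ne_zero (by simp [h0, h1, h2, h3]) (pow_ne_zero _ hden)

theorem stmt4_general (m : ℕ) (hm : 1 < m) (hm2 : m ≠ 2) (A B : ℂ) (l l' l'' : ℝ → ℂ)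
    (hl : ∀ φ ∈ Set.Ioo (-(π / 2)) (π / 2), HasDerivAt l (l' φ) φ)
    (hode1 : ∀ φ ∈ Set.Ioo (-(π / 2)) (π / 2),
      l'' φ = ((2 * (m : ℂ) - 4) / (2 * (m : ℂ) - 1)) * Complex.I * l' φ)
    (hode2 : ∀ φ ∈ Set.Ioo (-(π / 2)) (π / 2),
      l'' φ - (4 * Complex.I - 2 * (m : ℂ) * (Real.tan φ : ℂ)) * l' φ
        + 4 * (m : ℂ) * (1 - Complex.I * (Real.tan φ : ℂ)) * l φ = 0)
    (hform : ∀ φ ∈ Set.Ioo (-(π / 2)) (π / 2),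
      l φ = A * Complex.exp (((2 * (m : ℂ) - 4) / (2 * (m : ℂ) - 1)) * Complex.I * φ) + B) :
    A = 0 ∧ B = 0 := by
  generalize hc : (2 * (m : ℂ) - 4) / (2 * (m : ℂ) - 1) = c at hode1 hform
  have hl'_eq := eqOn_deriv_of_eqOn_const_mul_exp_add isOpen_Ioo hl hform
  have hreduced : ∀ φ ∈ Set.Ioo (-(π / 2)) (π / 2), A * Complex.exp (c * I * φ) *
      ((4 * m + 4 * c - c ^ 2) + I * (2 * m * (c - 2)) * Real.tan φ)
        + 4 * m * (1 - I * Real.tan φ) * B = 0 := by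
    intro φ hφ
    have h := hode2 φ hφ
    rw [hode1 φ hφ, hl'_eq φ hφ, hform φ hφ] at h
    linear_combination h - A * c * (c - 4) * Complex.exp (c * I * φ) * I_sq
  have hπ := pi_pos
  have h₀ := hreduced 0 ⟨by linarith, by linarith⟩
  have h₁ := hreduced (π / 4) ⟨by linarith, by linarith⟩
  have h₂ := hreduced (-(π / 4)) ⟨by linarith, by linarith⟩
  simp only [ofReal_zero, mul_zero, Complex.exp_zero, Real.tan_zero, mul_one, add_zero, sub_zero]
    at h₀
  simp only [Real.tan_neg, Real.tan_pi_div_four, ofReal_neg, ofReal_one, mul_one, mul_neg,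
    sub_neg_eq_add] at h₁ h₂
  have he : Complex.exp (c * I * (π / 4 : ℝ)) * Complex.exp (-(c * I * (π / 4 : ℝ))) = 1 := by
    rw [← Complex.exp_add, add_neg_cancel, Complex.exp_zero]
  have hA : A = 0 := by
    have h := sq_mul_sub_sq_eq_zero_of_three_points (μ := 2 * m * (c - 2)) he h₀ h₁
      (by linear_combination h₂)
    exact pow_eq_zero_iff two_ne_zero |>.1 <|
      (mul_eq_zero.1 h).resolve_right (sq_sub_sq_ne_zero_of_eq_div hm hm2 hc)
  refine ⟨hA, ?_⟩
  have hm0 : (4 * m : ℂ) ≠ 0 := by simp; omega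
  simpa [hA, hm0] using h₀

/-- If `λ` on `(-π/2, π/2)` satisfies both `λ'' = ((2m-4)/(2m-1)) i λ'` and
`λ'' - (4i - 2m tan φ) λ' + 4m (1 - i tan φ) λ = 0`, and has the form
`λ φ = A exp(((2m-4)/(2m-1)) i φ) + B` (m ≠ 2), then `A = B = 0`. -/
theorem stmt4 (m : ℕ) (hm : 1 < m) (hm2 : m ≠ 2) (A B : ℂ) (l l' l'' : ℝ → ℂ)
    (hl : ∀ φ ∈ Set.Ioo (-(π / 2)) (π / 2), HasDerivAt l (l' φ) φ)
    (hl' : ∀ φ ∈ Set.Ioo (-(π / 2)) (π / 2), HasDerivAt l' (l'' φ) φ)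
    (hode1 : ∀ φ ∈ Set.Ioo (-(π / 2)) (π / 2),
      l'' φ = ((2 * (m : ℂ) - 4) / (2 * (m : ℂ) - 1)) * Complex.I * l' φ)
    (hode2 : ∀ φ ∈ Set.Ioo (-(π / 2)) (π / 2),
      l'' φ - (4 * Complex.I - 2 * (m : ℂ) * (Real.tan φ : ℂ)) * l' φ
        + 4 * (m : ℂ) * (1 - Complex.I * (Real.tan φ : ℂ)) * l φ = 0)
    (hform : ∀ φ ∈ Set.Ioo (-(π / 2)) (π / 2),
      l φ = A * Complex.exp (((2 * (m : ℂ) - 4) / (2 * (m : ℂ) - 1)) * Complex.I * φ) + B) :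
    A = 0 ∧ B = 0 :=
  stmt4_general m hm hm2 A B l l' l'' hl hode1 hode2 hform
end

section
/- Let m ≥ 2 be an integer, let Λ, ulΛ, c be real constants, set b = -2(Λ/(2m+1) - ulΛ/(2m+2)) a_m where a₀ = 1, a_j = ((2m-2j+4)/(2m-2j+1)) a_{j-1}, and define λ₀(φ) = ulΛ/(2m+2) + (Λ/(2m+1) - ulΛ/(2m+2)) Σ_{j=0}^m a_j cos^{2j} φ + b cos^{2m+2} φ + c cos^{2m+1} φ sin φ. Then λ₀ satisfies the first-order ODE tan φ · λ₀'(φ) - (2m+2 - (2m+1) sec² φ) λ₀(φ) = Λ sec² φ - ulΛ on (-π/2, π/2) \ {0}. -/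
open Real

/-- The sequence `a₀ = 1`, `a_j = ((2m - 2j + 4)/(2m - 2j + 1)) a_{j-1}`. -/
noncomputable def aSeq (m : ℕ) : ℕ → ℝ
  | 0 => 1
  | j + 1 => ((2 * (m : ℝ) - 2 * ((j : ℝ) + 1) + 4) / (2 * (m : ℝ) - 2 * ((j : ℝ) + 1) + 1))
      * aSeq m j

/-- The function `λ₀` with `b = -2 (Λ/(2m+1) - ulΛ/(2m+2)) a_m`. -/
noncomputable def lam0 (m : ℕ) (Λ ulΛ c : ℝ) (φ : ℝ) : ℝ :=
  ulΛ / (2 * (m : ℝ) + 2)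
    + (Λ / (2 * (m : ℝ) + 1) - ulΛ / (2 * (m : ℝ) + 2)) *
        (∑ j ∈ Finset.range (m + 1), aSeq m j * Real.cos φ ^ (2 * j))
    + (-2 * (Λ / (2 * (m : ℝ) + 1) - ulΛ / (2 * (m : ℝ) + 2)) * aSeq m m)
        * Real.cos φ ^ (2 * m + 2)
    + c * Real.cos φ ^ (2 * m + 1) * Real.sin φ

/-!
Multiplying the equation by `cos² φ` turns it into `sin φ cos φ λ' - ((2m+2) cos² φ - (2m+1)) λ =
Λ - ulΛ cos² φ`, which is linear in `λ` and maps `cos^k` to `(2m+1-k) cos^k - (2m+2-k) cos^(k+2)`.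
The recursion for `a_j` makes the images of `a_j cos^(2j)` telescope, so the even polynomial
`∑ a_j cos^(2j) - 2 a_m cos^(2m+2)` is sent to the constant `2m+1`, while `cos^(2m+1) sin` solves
the homogeneous equation. Then `λ₀` is a particular solution plus a multiple of a homogeneous one.
-/

open Finset

section

variable (m : ℕ)

lemma aSeq_succ_mul (n : ℕ) :
    aSeq m (n + 1) * (2 * (m : ℝ) + 1 - 2 * ((n : ℝ) + 1)) =
      aSeq m n * (2 * (m : ℝ) + 2 - 2 * (n : ℝ)) := by
  have hodd : 2 * (m : ℝ) - 2 * ((n : ℝ) + 1) + 1 ≠ 0 := by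
    intro h
    have : (2 * (m : ℤ) - 2 * ((n : ℤ) + 1) + 1 : ℤ) = 0 := by exact_mod_cast h
    omega
  rw [aSeq, div_mul_eq_mul_div, div_mul_eq_mul_div, div_eq_iff hodd]
  ring

lemma sum_range_aSeq_mul_telescope (x : ℝ) (n : ℕ) :
    ∑ j ∈ range (n + 1), aSeq m j *
        ((2 * (m : ℝ) + 1 - 2 * j) * x ^ (2 * j) - (2 * (m : ℝ) + 2 - 2 * j) * x ^ (2 * j + 2)) =
      2 * (m : ℝ) + 1 - aSeq m n * (2 * (m : ℝ) + 2 - 2 * n) * x ^ (2 * n + 2) := by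
  induction n with
  | zero => simp [aSeq]
  | succ k ih =>
    rw [sum_range_succ, ih]
    push_cast
    linear_combination x ^ (2 * k + 2) * aSeq_succ_mul m k

/-- `cos² φ` times the left-hand side of the equation, at a function with value `y` and
derivative `y'` at `φ`. -/
noncomputable def clearedODE (φ y y' : ℝ) : ℝ :=
  sin φ * cos φ * y' - ((2 * m + 2) * cos φ ^ 2 - (2 * m + 1)) * y

lemma tan_mul_sub_eq_clearedODE_div {φ : ℝ} (hφ : cos φ ≠ 0) (y y' : ℝ) :
    tan φ * y' - (2 * (m : ℝ) + 2 - (2 * (m : ℝ) + 1) * (1 / cos φ) ^ 2) * y =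
      clearedODE m φ y y' / cos φ ^ 2 := by
  rw [tan_eq_sin_div_cos, clearedODE]
  field_simp

lemma clearedODE_sub (φ y₁ y₁' y₂ y₂' : ℝ) :
    clearedODE m φ (y₁ - y₂) (y₁' - y₂') = clearedODE m φ y₁ y₁' - clearedODE m φ y₂ y₂' := by
  simp only [clearedODE]
  ring

lemma clearedODE_const_mul (φ a y y' : ℝ) :
    clearedODE m φ (a * y) (a * y') = a * clearedODE m φ y y' := by
  simp only [clearedODE]
  ring

lemma clearedODE_sum {ι : Type*} (s : Finset ι) (φ : ℝ) (y y' : ι → ℝ) :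
    clearedODE m φ (∑ i ∈ s, y i) (∑ i ∈ s, y' i) = ∑ i ∈ s, clearedODE m φ (y i) (y' i) := by
  simp only [clearedODE, mul_sum, ← sum_sub_distrib]

lemma clearedODE_cos_pow (φ : ℝ) (k : ℕ) :
    clearedODE m φ (cos φ ^ k) (k * cos φ ^ (k - 1) * -sin φ) =
      (2 * m + 1 - k) * cos φ ^ k - (2 * m + 2 - k) * cos φ ^ (k + 2) := by
  rcases k with _ | k
  · simp only [clearedODE]
    ring
  · simp only [clearedODE, Nat.add_sub_cancel]
    push_cast
    linear_combination (-(k + 1 : ℝ) * cos φ ^ (k + 1)) * sin_sq_add_cos_sq φ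

lemma exists_hasDerivAt_cos_pow_mul_sin (φ : ℝ) :
    ∃ y', HasDerivAt (fun x => cos x ^ (2 * m + 1) * sin x) y' φ ∧
      clearedODE m φ (cos φ ^ (2 * m + 1) * sin φ) y' = 0 := by
  refine ⟨_, ((hasDerivAt_cos φ).pow _).mul (hasDerivAt_sin φ), ?_⟩
  simp only [clearedODE, Pi.pow_apply, Nat.add_sub_cancel]
  push_cast
  linear_combination (-(2 * m + 1 : ℝ) * cos φ ^ (2 * m + 1) * sin φ) * sin_sq_add_cos_sq φ

noncomputable def evenPart (φ : ℝ) : ℝ :=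
  ∑ j ∈ range (m + 1), aSeq m j * cos φ ^ (2 * j) - 2 * aSeq m m * cos φ ^ (2 * m + 2)

lemma exists_hasDerivAt_evenPart (φ : ℝ) :
    ∃ y', HasDerivAt (evenPart m) y' φ ∧ clearedODE m φ (evenPart m φ) y' = 2 * m + 1 := by
  have hsum := HasDerivAt.fun_sum (u := range (m + 1))
    fun j _ => ((hasDerivAt_cos φ).pow (2 * j)).const_mul (aSeq m j)
  have htop := ((hasDerivAt_cos φ).pow (2 * m + 2)).const_mul (2 * aSeq m m)
  refine ⟨_, hsum.sub htop, ?_⟩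
  simp only [evenPart, clearedODE_sub, clearedODE_sum, clearedODE_const_mul, clearedODE_cos_pow]
  push_cast
  rw [sum_range_aSeq_mul_telescope]
  ring

lemma lam0_eq (Λ ulΛ c : ℝ) :
    lam0 m Λ ulΛ c = fun φ => ulΛ / (2 * m + 2)
      + (Λ / (2 * m + 1) - ulΛ / (2 * m + 2)) * evenPart m φ
      + c * (cos φ ^ (2 * m + 1) * sin φ) := by
  funext φ
  simp only [lam0, evenPart]
  ring

end

theorem stmt7_general (m : ℕ) (Λ ulΛ c : ℝ) :
    ∀ φ ∈ Set.Ioo (-(π / 2)) (π / 2), φ ≠ 0 →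
      Real.tan φ * deriv (lam0 m Λ ulΛ c) φ
        - (2 * (m : ℝ) + 2 - (2 * (m : ℝ) + 1) * (1 / Real.cos φ) ^ 2) * lam0 m Λ ulΛ c φ
        = Λ * (1 / Real.cos φ) ^ 2 - ulΛ := by
  intro φ hφ _
  have hcos : cos φ ≠ 0 := (cos_pos_of_mem_Ioo hφ).ne'
  obtain ⟨P', hP, hPode⟩ := exists_hasDerivAt_evenPart m φ
  obtain ⟨Q', hQ, hQode⟩ := exists_hasDerivAt_cos_pow_mul_sin m φ
  set K := Λ / (2 * (m : ℝ) + 1) - ulΛ / (2 * (m : ℝ) + 2)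
  have hlam : HasDerivAt (lam0 m Λ ulΛ c) (K * P' + c * Q') φ := by
    rw [lam0_eq]
    simpa using ((hasDerivAt_const φ _).fun_add (hP.const_mul K)).fun_add (hQ.const_mul c)
  have hode : clearedODE m φ (lam0 m Λ ulΛ c φ) (K * P' + c * Q') =
      (2 * m + 1 - (2 * m + 2) * cos φ ^ 2) * (ulΛ / (2 * m + 2)) + K * (2 * m + 1) := by
    rw [lam0_eq]
    simp only [clearedODE] at hPode hQode ⊢
    linear_combination K * hPode + c * hQode
  rw [hlam.deriv, tan_mul_sub_eq_clearedODE_div m hcos, hode]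
  simp only [K]
  field_simp
  ring

/-- `λ₀` satisfies the first-order ODE
`tan φ λ₀' - (2m+2 - (2m+1) sec² φ) λ₀ = Λ sec² φ - ulΛ` on `(-π/2, π/2) \ {0}`. -/
theorem stmt7 (m : ℕ) (hm : 2 ≤ m) (Λ ulΛ c : ℝ) :
    ∀ φ ∈ Set.Ioo (-(π / 2)) (π / 2), φ ≠ 0 →
      Real.tan φ * deriv (lam0 m Λ ulΛ c) φ
        - (2 * (m : ℝ) + 2 - (2 * (m : ℝ) + 1) * (1 / Real.cos φ) ^ 2) * lam0 m Λ ulΛ c φ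
        = Λ * (1 / Real.cos φ) ^ 2 - ulΛ :=
  stmt7_general m Λ ulΛ c
end
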